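/- arXiv:1008.1042 — 2 statements merged into one kernel-verified Lean document; each statement's English description precedes it below -/
import Mathlib

section
/- Let M be a symmetric irreducible r×r 0–1 transition matrix and let A : Σ̂_M → ℝ be Lipschitz continuous. Then for every Lipschitz function φ on Σ_M, the function G⁺_A(φ) is Lipschitz with Lipschitz constant Lip(G⁺_A(φ)) ≤ ‖A‖₀ + Lip(A). -/
open MeasureTheory Filter Topology Real

/-- The one-sided subshift of finite type defined by the 0-1 transition matrix `M`:
sequences `x : ℕ → Fin r` with `M (x j) (x (j+1)) = 1` for all `j`. -/
abbrev Shift (r : ℕ) (M : Fin r → Fin r → Bool) : Type :=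
  {x : ℕ → Fin r // ∀ j : ℕ, M (x j) (x (j + 1)) = true}

variable {r : ℕ} {M : Fin r → Fin r → Bool}

/-- The matrix `M` is irreducible: any symbol can be joined to any other by an
admissible path of positive length. -/
def Irred (M : Fin r → Fin r → Bool) : Prop :=
  ∀ i j : Fin r, ∃ n : ℕ, ∃ w : Fin (n + 2) → Fin r,
    w 0 = i ∧ w (Fin.last (n + 1)) = j ∧
    ∀ k : Fin (n + 1), M (w k.castSucc) (w k.succ) = true

/-- The left shift map on the subshift. -/
def shiftMap (x : Shift r M) : Shift r M :=
  ⟨fun j => x.1 (j + 1), fun j => x.2 (j + 1)⟩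

/-- The metric `d(x,y) = Λ^k`, `k = min { j : x_j ≠ y_j }`, `d(x,x) = 0`. -/
noncomputable def shiftDist (Λ : ℝ) (x y : Shift r M) : ℝ :=
  letI := Classical.decEq (Shift r M)
  if h : x = y then 0
  else Λ ^ Nat.find (show ∃ j : ℕ, x.1 j ≠ y.1 j by
    by_contra hc
    push_neg at hc
    exact h (Subtype.ext (funext hc)))

/-- `φ` is Lipschitz with constant `K` for the metric `shiftDist Λ`. -/
def LipBnd (Λ K : ℝ) (φ : Shift r M → ℝ) : Prop :=
  ∀ x y : Shift r M, |φ x - φ y| ≤ K * shiftDist Λ x y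

/-- `φ` is Lipschitz continuous for the metric `shiftDist Λ`. -/
def IsLip (Λ : ℝ) (φ : Shift r M → ℝ) : Prop :=
  ∃ K : ℝ, LipBnd Λ K φ

/-- The best Lipschitz constant of `φ`. -/
noncomputable def lipC (Λ : ℝ) (φ : Shift r M → ℝ) : ℝ :=
  sInf {K : ℝ | 0 ≤ K ∧ LipBnd Λ K φ}

/-- The uniform norm `‖φ‖₀`. -/
noncomputable def unorm (φ : Shift r M → ℝ) : ℝ :=
  ⨆ x : Shift r M, |φ x|

/-- An observable on the natural extension `Σ̂_M ⊂ Σ*_M × Σ_M` (with `Σ*_M`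
canonically identified with `Σ_M`), as a function of `(y, x)`; it is Lipschitz with
constant `K` for the max-metric. -/
def LipBnd2 (Λ K : ℝ) (A : Shift r M → Shift r M → ℝ) : Prop :=
  ∀ y x y' x' : Shift r M,
    |A y x - A y' x'| ≤ K * max (shiftDist Λ y y') (shiftDist Λ x x')

/-- `A` is Lipschitz continuous on `Σ̂_M`. -/
def IsLip2 (Λ : ℝ) (A : Shift r M → Shift r M → ℝ) : Prop :=
  ∃ K : ℝ, LipBnd2 Λ K A

/-- The best Lipschitz constant of the observable `A`. -/
noncomputable def lipC2 (Λ : ℝ) (A : Shift r M → Shift r M → ℝ) : ℝ :=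
  sInf {K : ℝ | 0 ≤ K ∧ LipBnd2 Λ K A}

/-- The uniform norm `‖A‖₀` of the observable. -/
noncomputable def unorm2 (A : Shift r M → Shift r M → ℝ) : ℝ :=
  ⨆ p : Shift r M × Shift r M, |A p.1 p.2|

/-- `μ` is a `σ`-invariant Borel probability measure on the subshift. -/
def InvProb (μ : Measure (Shift r M)) : Prop :=
  IsProbabilityMeasure μ ∧ μ.map shiftMap = μ

/-- Entropy of the cylinder partition of length `n`:
`H_n(μ) = - ∑_{|w| = n} μ([w]) log μ([w])`. -/
noncomputable def cylEnt (μ : Measure (Shift r M)) (n : ℕ) : ℝ :=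
  ∑ w : Fin n → Fin r,
    Real.negMulLog ((μ {x : Shift r M | ∀ i : Fin n, x.1 i.1 = w i}).toReal)

/-- The Kolmogorov–Sinai entropy `h_μ(σ)` of an invariant measure on the subshift:
since the cylinder partition is generating and `n ↦ H_n(μ)` is subadditive,
`h_μ(σ) = lim_n H_n(μ)/n = inf_n H_n(μ)/n`. -/
noncomputable def entropy (μ : Measure (Shift r M)) : ℝ :=
  ⨅ n : ℕ, cylEnt μ (n + 1) / (n + 1)

/-- The operator
`G⁺_A(φ)(y) = sup_{μ ∈ M_σ} [ ∫ (A(y,x) + φ(x)) dμ(x) + h_μ(σ) ]`. -/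
noncomputable def Gplus (A : Shift r M → Shift r M → ℝ)
    (φ : Shift r M → ℝ) (y : Shift r M) : ℝ :=
  sSup {t : ℝ | ∃ μ : Measure (Shift r M), InvProb μ ∧
    t = ∫ x, (A y x + φ x) ∂μ + entropy μ}

/-- The maximal ergodic average `max_{μ ∈ M_σ} ∫ B dμ`. -/
noncomputable def maxErg (B : Shift r M → ℝ) : ℝ :=
  sSup {t : ℝ | ∃ μ : Measure (Shift r M), InvProb μ ∧ t = ∫ x, B x ∂μ}

/-- The quotient norm on functions modulo additive constants:
`‖g‖_c = inf_{γ ∈ ℝ} ‖g + γ‖₀`. -/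
noncomputable def cnorm (g : Shift r M → ℝ) : ℝ :=
  ⨅ γ : ℝ, unorm (fun x => g x + γ)

/-! The only dependence of `G⁺_A(φ)(y)` on `y` is through the integrand `A(y, ·)`, which moves
by at most `Lip(A) · d(y, y')` in sup norm when `y` moves to `y'`. Hence every competitor in the
supremum defining `G⁺_A(φ)(y)` is within `Lip(A) · d(y, y')` of a competitor for `y'`, and
`G⁺_A(φ)` is `Lip(A)`-Lipschitz, a fortiori `(‖A‖₀ + Lip(A))`-Lipschitz. Lipschitz continuity
of `φ` and the bound `h_μ(σ) ≤ r` keep all these suprema finite. -/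

variable {Λ K K' : ℝ}

section ShiftDist

lemma shiftDist_nonneg (hΛ : 0 ≤ Λ) (x y : Shift r M) : 0 ≤ shiftDist Λ x y := by
  unfold shiftDist
  split_ifs <;> positivity

lemma shiftDist_self (x : Shift r M) : shiftDist Λ x x = 0 := by
  simp [shiftDist]

lemma shiftDist_comm (Λ : ℝ) (x y : Shift r M) : shiftDist Λ x y = shiftDist Λ y x := by
  unfold shiftDist
  by_cases h : x = y
  · subst h; rfl
  · rw [dif_neg h, dif_neg (Ne.symm h)]
    congr 1
    exact le_antisymm (Nat.find_mono fun n hn => hn.symm) (Nat.find_mono fun n hn => hn.symm)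

lemma shiftDist_le_pow (hΛ0 : 0 ≤ Λ) (hΛ1 : Λ ≤ 1) {x y : Shift r M} {n : ℕ}
    (h : ∀ i < n, x.1 i = y.1 i) : shiftDist Λ x y ≤ Λ ^ n := by
  unfold shiftDist
  split_ifs
  · positivity
  · exact pow_le_pow_of_le_one hΛ0 hΛ1 ((Nat.le_find_iff _ _).2 fun m hm hne => hne (h m hm))

lemma shiftDist_le_one (hΛ0 : 0 ≤ Λ) (hΛ1 : Λ ≤ 1) (x y : Shift r M) :
    shiftDist Λ x y ≤ 1 := by
  simpa using shiftDist_le_pow hΛ0 hΛ1 (x := x) (y := y) (n := 0) (by simp)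

lemma eventually_nhds_forall_lt_eq (x : Shift r M) (n : ℕ) :
    ∀ᶠ z in 𝓝 x, ∀ i < n, z.1 i = x.1 i := by
  have hcoord (i : ℕ) : ∀ᶠ z in 𝓝 x, z.1 i = x.1 i :=
    ((continuous_apply i).comp continuous_subtype_val).continuousAt.eventually_mem
      ((isOpen_discrete {x.1 i}).mem_nhds rfl)
  simpa using (Finset.range n).eventually_all.2 fun i _ => hcoord i

end ShiftDist

section Lipschitz

variable {f g : Shift r M → ℝ} {A : Shift r M → Shift r M → ℝ}

lemma LipBnd.mono (hΛ : 0 ≤ Λ) (hKK' : K ≤ K') (hf : LipBnd Λ K f) : LipBnd Λ K' f :=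
  fun x y =>
  (hf x y).trans (mul_le_mul_of_nonneg_right hKK' (shiftDist_nonneg hΛ x y))

lemma LipBnd.add (hf : LipBnd Λ K f) (hg : LipBnd Λ K' g) :
    LipBnd Λ (K + K') (f + g) := fun x y =>
  calc |(f + g) x - (f + g) y| = |(f x - f y) + (g x - g y)| := by simp only [Pi.add_apply]; ring_nf
    _ ≤ |f x - f y| + |g x - g y| := abs_add_le _ _
    _ ≤ (K + K') * shiftDist Λ x y := by linarith [hf x y, hg x y]

lemma lipC_le (hK : 0 ≤ K) (hf : LipBnd Λ K f) : lipC Λ f ≤ K :=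
  csInf_le ⟨0, fun _ h => h.1⟩ ⟨hK, hf⟩

lemma LipBnd.continuous (hΛ0 : 0 < Λ) (hΛ1 : Λ < 1) (hf : LipBnd Λ K f) : Continuous f := by
  refine continuous_iff_continuousAt.2 fun x => Metric.tendsto_nhds.2 fun ε hε => ?_
  obtain ⟨n, hn⟩ : ∃ n, max K 0 * Λ ^ n < ε := by
    have hto : Tendsto (fun n => max K 0 * Λ ^ n) atTop (𝓝 0) := by
      simpa using (tendsto_pow_atTop_nhds_zero_of_lt_one hΛ0.le hΛ1).const_mul (max K 0)
    exact (hto.eventually (gt_mem_nhds hε)).exists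
  filter_upwards [eventually_nhds_forall_lt_eq x n] with z hz
  calc dist (f z) (f x) = |f z - f x| := Real.dist_eq _ _
    _ ≤ max K 0 * Λ ^ n :=
      ((hf.mono hΛ0.le (le_max_left K 0)) z x).trans (mul_le_mul_of_nonneg_left
        (shiftDist_le_pow hΛ0.le hΛ1.le hz) (le_max_right K 0))
    _ < ε := hn

lemma LipBnd.exists_forall_abs_le (hΛ0 : 0 ≤ Λ) (hΛ1 : Λ ≤ 1) (hf : LipBnd Λ K f) :
    ∃ C, ∀ x, |f x| ≤ C := by
  rcases isEmpty_or_nonempty (Shift r M) with hempty | hne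
  · exact ⟨0, fun x => isEmptyElim x⟩
  obtain ⟨x₀⟩ := hne
  refine ⟨|f x₀| + max K 0, fun x => ?_⟩
  have hdist : |f x - f x₀| ≤ max K 0 := by
    simpa using (hf.mono hΛ0 (le_max_left K 0) x x₀).trans
      (mul_le_mul_of_nonneg_left (shiftDist_le_one hΛ0 hΛ1 x x₀) (le_max_right K 0))
  linarith [abs_sub_abs_le_abs_sub (f x) (f x₀)]

lemma LipBnd.integrable (hΛ0 : 0 < Λ) (hΛ1 : Λ < 1) (hf : LipBnd Λ K f)
    (μ : Measure (Shift r M)) [IsFiniteMeasure μ] : Integrable f μ := by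
  obtain ⟨C, hC⟩ := hf.exists_forall_abs_le hΛ0.le hΛ1.le
  exact .of_bound (hf.continuous hΛ0 hΛ1).aestronglyMeasurable C (ae_of_all _ hC)

lemma unorm2_nonneg (A : Shift r M → Shift r M → ℝ) : 0 ≤ unorm2 A :=
  Real.iSup_nonneg fun _ => abs_nonneg _

lemma lipC2_nonneg (Λ : ℝ) (A : Shift r M → Shift r M → ℝ) : 0 ≤ lipC2 Λ A :=
  Real.sInf_nonneg fun _ h => h.1

lemma LipBnd2.lipBnd_right (hΛ : 0 ≤ Λ) (hA : LipBnd2 Λ K A) (y : Shift r M) :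
    LipBnd Λ K (A y) := fun x x' => by
  simpa [shiftDist_self, max_eq_right (shiftDist_nonneg hΛ x x')] using hA y x y x'

lemma LipBnd2.le_add_left (hΛ : 0 ≤ Λ) (hA : LipBnd2 Λ K A) (y y' x : Shift r M) :
    A y x ≤ A y' x + K * shiftDist Λ y y' := by
  have h := hA y x y' x
  rw [shiftDist_self, max_eq_left (shiftDist_nonneg hΛ y y')] at h
  linarith [le_abs_self (A y x - A y' x)]

/-- The set of admissible constants is closed, so it contains its infimum. -/
lemma lipBnd2_lipC2 (hΛ : 0 ≤ Λ) (hA : IsLip2 Λ A) : LipBnd2 Λ (lipC2 Λ A) A := by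
  obtain ⟨K, hK⟩ := hA
  have hne : {K : ℝ | 0 ≤ K ∧ LipBnd2 Λ K A}.Nonempty :=
    ⟨max K 0, le_max_right K 0, fun y x y' x' => (hK y x y' x').trans
      (mul_le_mul_of_nonneg_right (le_max_left K 0)
        (le_max_of_le_left (shiftDist_nonneg hΛ y y')))⟩
  have hclosed : IsClosed {K : ℝ | 0 ≤ K ∧ LipBnd2 Λ K A} := by
    simp only [LipBnd2, Set.ofPred_and, Set.ofPred_forall]
    exact isClosed_Ici.inter <| isClosed_iInter fun y => isClosed_iInter fun x =>
      isClosed_iInter fun y' => isClosed_iInter fun x' =>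
        isClosed_le continuous_const (continuous_id.mul continuous_const)
  exact (hclosed.csInf_mem hne ⟨0, fun _ h => h.1⟩).2

end Lipschitz

section Entropy

lemma cylEnt_nonneg (μ : Measure (Shift r M)) [IsProbabilityMeasure μ] (n : ℕ) :
    0 ≤ cylEnt μ n :=
  Finset.sum_nonneg fun _ _ => Real.negMulLog_nonneg ENNReal.toReal_nonneg measureReal_le_one

lemma entropy_le_card (μ : Measure (Shift r M)) [IsProbabilityMeasure μ] : entropy μ ≤ r := by
  have hbdd : BddBelow (Set.range fun n : ℕ => cylEnt μ (n + 1) / (n + 1)) :=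
    ⟨0, by rintro _ ⟨n, rfl⟩; exact div_nonneg (cylEnt_nonneg μ _) (by positivity)⟩
  calc entropy μ ≤ cylEnt μ 1 := (ciInf_le hbdd 0).trans_eq (by simp)
    _ ≤ ∑ _w : Fin 1 → Fin r, (1 : ℝ) := Finset.sum_le_sum fun _ _ =>
        (Real.negMulLog_le_one_sub_self ENNReal.toReal_nonneg).trans
          (sub_le_self _ ENNReal.toReal_nonneg)
    _ = r := by simp

end Entropy

lemma sSup_setOf_le_add {ι : Type*} {p : ι → Prop} {f g : ι → ℝ} {B c : ℝ} (hc : 0 ≤ c)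
    (hgB : ∀ i, p i → g i ≤ B) (hfg : ∀ i, p i → f i ≤ g i + c) :
    sSup {t | ∃ i, p i ∧ t = f i} ≤ sSup {t | ∃ i, p i ∧ t = g i} + c := by
  by_cases hp : ∃ i, p i
  · obtain ⟨i₀, hi₀⟩ := hp
    refine csSup_le ⟨f i₀, i₀, hi₀, rfl⟩ ?_
    rintro _ ⟨i, hi, rfl⟩
    have hg : g i ≤ sSup {t | ∃ i, p i ∧ t = g i} :=
      le_csSup ⟨B, by rintro _ ⟨j, hj, rfl⟩; exact hgB j hj⟩ ⟨i, hi, rfl⟩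
    linarith [hfg i hi]
  · have hempty (h : ι → ℝ) : {t | ∃ i, p i ∧ t = h i} = ∅ :=
      Set.eq_empty_of_forall_notMem fun _ ⟨i, hi, _⟩ => hp ⟨i, hi⟩
    simp [hempty, hc]

section Gplus

variable {A : Shift r M → Shift r M → ℝ} {φ : Shift r M → ℝ}

lemma Gplus_le_add (hΛ0 : 0 < Λ) (hΛ1 : Λ < 1) (hK : 0 ≤ K) (hA : LipBnd2 Λ K A)
    (hφ : IsLip Λ φ) (y y' : Shift r M) :
    Gplus A φ y ≤ Gplus A φ y' + K * shiftDist Λ y y' := by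
  obtain ⟨Kφ, hKφ⟩ := hφ
  have hlip (z : Shift r M) : LipBnd Λ (K + Kφ) (fun x => A z x + φ x) :=
    (hA.lipBnd_right hΛ0.le z).add hKφ
  obtain ⟨C, hC⟩ := (hlip y').exists_forall_abs_le hΛ0.le hΛ1.le
  refine sSup_setOf_le_add (B := C + r)
    (mul_nonneg hK (shiftDist_nonneg hΛ0.le y y')) (fun μ hμ => ?_) (fun μ hμ => ?_)
  · have := hμ.1
    have hnorm : ‖∫ x, (A y' x + φ x) ∂μ‖ ≤ C * μ.real Set.univ :=
      norm_integral_le_of_norm_le_const (ae_of_all _ fun x => (Real.norm_eq_abs _).trans_le (hC x))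
    rw [probReal_univ, mul_one, Real.norm_eq_abs] at hnorm
    linarith [le_abs_self (∫ x, (A y' x + φ x) ∂μ), entropy_le_card μ]
  · have := hμ.1
    have hint (z : Shift r M) := (hlip z).integrable hΛ0 hΛ1 μ
    have hmono :
        ∫ x, (A y x + φ x) ∂μ ≤ ∫ x, (A y' x + φ x) ∂μ + K * shiftDist Λ y y' :=
      calc ∫ x, (A y x + φ x) ∂μ ≤ ∫ x, (A y' x + φ x + K * shiftDist Λ y y') ∂μ :=
            integral_mono (hint y) ((hint y').add (integrable_const _))
              fun x => by linarith [hA.le_add_left hΛ0.le y y' x]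
        _ = ∫ x, (A y' x + φ x) ∂μ + K * shiftDist Λ y y' := by
            rw [integral_add (hint y') (integrable_const _)]
            simp
    linarith

lemma lipBnd_Gplus (hΛ0 : 0 < Λ) (hΛ1 : Λ < 1) (hK : 0 ≤ K) (hA : LipBnd2 Λ K A)
    (hφ : IsLip Λ φ) : LipBnd Λ K (Gplus A φ) := fun y y' => by
  have h₁ := Gplus_le_add hΛ0 hΛ1 hK hA hφ y y'
  have h₂ := Gplus_le_add hΛ0 hΛ1 hK hA hφ y' y
  rw [shiftDist_comm Λ y' y] at h₂
  exact abs_sub_le_iff.2 ⟨by linarith, by linarith⟩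

end Gplus

theorem Gplus_lipschitz_bound_general
    (r : ℕ) (M : Fin r → Fin r → Bool)
    (Λ : ℝ) (hΛ : Λ ∈ Set.Ioo (0 : ℝ) 1)
    (A : Shift r M → Shift r M → ℝ) (hA : IsLip2 Λ A) :
    ∀ φ : Shift r M → ℝ, IsLip Λ φ →
      LipBnd Λ (unorm2 A + lipC2 Λ A) (Gplus A φ) ∧
      lipC Λ (Gplus A φ) ≤ unorm2 A + lipC2 Λ A := by
  intro φ hφ
  obtain ⟨hΛ0, hΛ1⟩ := hΛ
  have hG : LipBnd Λ (unorm2 A + lipC2 Λ A) (Gplus A φ) :=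
    (lipBnd_Gplus hΛ0 hΛ1 (lipC2_nonneg Λ A) (lipBnd2_lipC2 hΛ0.le hA) hφ).mono hΛ0.le
      (le_add_of_nonneg_left (unorm2_nonneg A))
  exact ⟨hG, lipC_le (add_nonneg (unorm2_nonneg A) (lipC2_nonneg Λ A)) hG⟩

/-- For a symmetric irreducible transition matrix `M` and a Lipschitz
observable `A` on the natural extension, for every Lipschitz `φ` on `Σ_M` the function
`G⁺_A(φ)` is Lipschitz with `Lip(G⁺_A(φ)) ≤ ‖A‖₀ + Lip(A)`. -/
theorem Gplus_lipschitz_bound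
    (r : ℕ) (hr : 2 ≤ r) (M : Fin r → Fin r → Bool)
    (hSym : ∀ i j, M i j = M j i) (hIrr : Irred M)
    (Λ : ℝ) (hΛ : Λ ∈ Set.Ioo (0 : ℝ) 1)
    (A : Shift r M → Shift r M → ℝ) (hA : IsLip2 Λ A) :
    ∀ φ : Shift r M → ℝ, IsLip Λ φ →
      LipBnd Λ (unorm2 A + lipC2 Λ A) (Gplus A φ) ∧
      lipC Λ (Gplus A φ) ≤ unorm2 A + lipC2 Λ A :=
  Gplus_lipschitz_bound_general r M Λ hΛ A hA
end

section
/- Let F be a closed subset of a real Banach space with norm ‖·‖, and suppose G : F → F satisfies ‖G(φ) − G(ψ)‖ ≤ (1 − C‖φ − ψ‖^α) ‖φ − ψ‖ for all φ, ψ ∈ F, for some constants C, α > 0. Then there exists a unique φ⁺ ∈ F with G(φ⁺) = φ⁺, and moreover for every φ₀ ∈ F the sequence of iterates G^n(φ₀) converges to φ⁺. -/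
open Filter Topology Function

/-!
Write `d n` for the distance between the `n`-th iterates of two points. The hypothesis gives
`d (n+1) ≤ (1 - C d n ^ α) d n`, and since `(1 + α x) (1 - x) ^ α ≤ e ^ (α x) e ^ (-α x) = 1`,
the quantity `d n ^ (-α)` grows by at least `α C` at each step. Hence
`d n ≤ (C (1 + α n)) ^ (-1/α)` uniformly in the two starting points, which makes every orbit
Cauchy and forces any two orbits together; the limit is fixed because the map is 1-Lipschitz.
-/

theorem one_add_mul_mul_one_sub_rpow_le_one {x α : ℝ} (hx : x ≤ 1) (hα : 0 ≤ α) :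
    (1 + α * x) * (1 - x) ^ α ≤ 1 :=
  calc (1 + α * x) * (1 - x) ^ α
      ≤ Real.exp (α * x) * Real.exp (-x) ^ α :=
        mul_le_mul (by linarith [Real.add_one_le_exp (α * x)])
          (Real.rpow_le_rpow (by linarith) (Real.one_sub_le_exp_neg x) hα)
          (Real.rpow_nonneg (by linarith) α) (Real.exp_nonneg _)
    _ = 1 := by rw [← Real.exp_mul, ← Real.exp_add]; ring_nf; exact Real.exp_zero

section Decay

variable {C α d d' : ℝ}

theorem mul_rpow_le_one_of_le_one_sub_mul_rpow (hα : 0 < α) (hd' : 0 ≤ d')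
    (h : d' ≤ (1 - C * d ^ α) * d) (hd : 0 ≤ d) : C * d ^ α ≤ 1 := by
  rcases hd.eq_or_lt with rfl | hpos
  · simp [Real.zero_rpow hα.ne']
  · linarith [nonneg_of_mul_nonneg_left (hd'.trans h) hpos]

theorem one_add_mul_mul_rpow_le_rpow_of_le_one_sub_mul_rpow (hC : 0 ≤ C) (hα : 0 < α)
    (hd' : 0 ≤ d') (h : d' ≤ (1 - C * d ^ α) * d) (hd : 0 ≤ d) :
    (1 + α * (C * d ^ α)) * d' ^ α ≤ d ^ α := by
  have hx := mul_rpow_le_one_of_le_one_sub_mul_rpow hα hd' h hd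
  calc (1 + α * (C * d ^ α)) * d' ^ α
      ≤ (1 + α * (C * d ^ α)) * ((1 - C * d ^ α) ^ α * d ^ α) := by
        gcongr
        rw [← Real.mul_rpow (by linarith) hd]
        exact Real.rpow_le_rpow hd' h hα.le
    _ = (1 + α * (C * d ^ α)) * (1 - C * d ^ α) ^ α * d ^ α := by ring
    _ ≤ 1 * d ^ α := by
        gcongr
        exact one_add_mul_mul_one_sub_rpow_le_one hx hα.le
    _ = d ^ α := one_mul _

theorem mul_one_add_mul_mul_rpow_le_one {d : ℕ → ℝ} (hC : 0 < C) (hα : 0 < α)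
    (hd : ∀ n, 0 ≤ d n) (hstep : ∀ n, d (n + 1) ≤ (1 - C * d n ^ α) * d n) (n : ℕ) :
    C * (1 + α * n) * d n ^ α ≤ 1 := by
  induction n with
  | zero => simpa using mul_rpow_le_one_of_le_one_sub_mul_rpow hα (hd 1) (hstep 0) (hd 0)
  | succ n ih =>
    have h := one_add_mul_mul_rpow_le_rpow_of_le_one_sub_mul_rpow hC.le hα (hd (n + 1))
      (hstep n) (hd n)
    have hs : 0 < 1 + α * (C * d n ^ α) := by
      have := Real.rpow_nonneg (hd n) α
      positivity
    have hK : 0 ≤ C * (1 + α * n) + α * C := by positivity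
    have key : (1 + α * (C * d n ^ α)) * ((C * (1 + α * n) + α * C) * d (n + 1) ^ α)
        ≤ (1 + α * (C * d n ^ α)) * 1 := by
      nlinarith [mul_le_mul_of_nonneg_left h hK]
    calc C * (1 + α * ↑(n + 1)) * d (n + 1) ^ α
        = (C * (1 + α * n) + α * C) * d (n + 1) ^ α := by push_cast; ring
      _ ≤ 1 := le_of_mul_le_mul_left key hs

theorem le_rpow_inv_of_le_one_sub_mul_rpow {d : ℕ → ℝ} (hC : 0 < C) (hα : 0 < α)
    (hd : ∀ n, 0 ≤ d n) (hstep : ∀ n, d (n + 1) ≤ (1 - C * d n ^ α) * d n) (n : ℕ) :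
    d n ≤ (C * (1 + α * n))⁻¹ ^ α⁻¹ := by
  have hK : 0 < C * (1 + α * n) := by positivity
  rw [Real.le_rpow_inv_iff_of_pos (hd n) (inv_nonneg.2 hK.le) hα,
    ← mul_one (C * (1 + α * n))⁻¹, le_inv_mul_iff₀ hK]
  exact mul_one_add_mul_mul_rpow_le_one hC hα hd hstep n

theorem tendsto_inv_rpow_inv_zero (hC : 0 < C) (hα : 0 < α) :
    Tendsto (fun n : ℕ => (C * (1 + α * n))⁻¹ ^ α⁻¹) atTop (𝓝 0) := by
  have hK : Tendsto (fun n : ℕ => C * (1 + α * n)) atTop atTop :=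
    (tendsto_atTop_add_const_left _ _
      (tendsto_natCast_atTop_atTop.const_mul_atTop hα)).const_mul_atTop hC
  have hpow := (tendsto_rpow_atTop (inv_pos.2 hα)).comp hK
  refine (tendsto_inv_atTop_zero.comp hpow).congr' ?_
  filter_upwards [hK.eventually_ge_atTop 0] with n hn
  exact (Real.inv_rpow hn _).symm

end Decay

section MetricSpace

variable {X : Type*} [MetricSpace X] {f : X → X} {C α : ℝ}

theorem dist_iterate_le (hC : 0 < C) (hα : 0 < α)
    (hf : ∀ x y, dist (f x) (f y) ≤ (1 - C * dist x y ^ α) * dist x y) (x y : X) (n : ℕ) :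
    dist (f^[n] x) (f^[n] y) ≤ (C * (1 + α * n))⁻¹ ^ α⁻¹ :=
  le_rpow_inv_of_le_one_sub_mul_rpow (d := fun n => dist (f^[n] x) (f^[n] y)) hC hα
    (fun _ => dist_nonneg)
    (fun n => by rw [iterate_succ_apply', iterate_succ_apply']; exact hf _ _) n

theorem exists_isFixedPt_tendsto_iterate_of_dist_le_one_sub_mul_rpow [CompleteSpace X]
    [Nonempty X] (hC : 0 < C) (hα : 0 < α)
    (hf : ∀ x y, dist (f x) (f y) ≤ (1 - C * dist x y ^ α) * dist x y) :
    ∃ p, IsFixedPt f p ∧ (∀ q, IsFixedPt f q → q = p) ∧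
      ∀ x, Tendsto (fun n => f^[n] x) atTop (𝓝 p) := by
  have hrate := tendsto_inv_rpow_inv_zero hC hα
  have hlip : LipschitzWith 1 f := LipschitzWith.mk_one fun x y => by
    have := hf x y
    have : 0 ≤ C * dist x y ^ α := by positivity
    nlinarith [dist_nonneg (x := x) (y := y)]
  obtain ⟨x₀⟩ := ‹Nonempty X›
  have hcauchy : CauchySeq (fun n => f^[n] x₀) := by
    refine cauchySeq_of_le_tendsto_0 _ (fun n m N hn hm => ?_) hrate
    obtain ⟨k, rfl⟩ := Nat.exists_eq_add_of_le hn
    obtain ⟨l, rfl⟩ := Nat.exists_eq_add_of_le hm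
    simpa only [iterate_add_apply] using dist_iterate_le hC hα hf (f^[k] x₀) (f^[l] x₀) N
  obtain ⟨p, hp⟩ := cauchySeq_tendsto_of_complete hcauchy
  have hfix : IsFixedPt f p := isFixedPt_of_tendsto_iterate hp hlip.continuous.continuousAt
  have htendsto : ∀ x, Tendsto (fun n => f^[n] x) atTop (𝓝 p) := fun x => by
    refine tendsto_iff_dist_tendsto_zero.2 <|
      squeeze_zero (fun _ => dist_nonneg) (fun n => ?_) hrate
    simpa only [(hfix.iterate n).eq] using dist_iterate_le hC hα hf x p n
  refine ⟨p, hfix, fun q hq => ?_, htendsto⟩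
  have horbit : (fun n => f^[n] q) = fun _ => q := funext fun n => (hq.iterate n).eq
  exact tendsto_nhds_unique (horbit ▸ tendsto_const_nhds) (htendsto q)

end MetricSpace

theorem gomes_valdinoci_fixed_point_general
    {E : Type*} [NormedAddCommGroup E] [CompleteSpace E]
    (F : Set E) (hF : IsClosed F) (hFne : F.Nonempty)
    (G : E → E) (hmaps : ∀ φ ∈ F, G φ ∈ F)
    (C α : ℝ) (hC : 0 < C) (hα : 0 < α)
    (hcontr : ∀ φ ∈ F, ∀ ψ ∈ F,
      ‖G φ - G ψ‖ ≤ (1 - C * ‖φ - ψ‖ ^ α) * ‖φ - ψ‖) :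
    ∃ φp ∈ F, G φp = φp ∧ (∀ ψ ∈ F, G ψ = ψ → ψ = φp) ∧
      ∀ φ₀ ∈ F, Tendsto (fun n => G^[n] φ₀) atTop (𝓝 φp) := by
  have : CompleteSpace F := hF.completeSpace_coe
  have : Nonempty F := hFne.to_subtype
  have hmapsTo : Set.MapsTo G F F := hmaps
  obtain ⟨p, hfix, huniq, htendsto⟩ :=
    exists_isFixedPt_tendsto_iterate_of_dist_le_one_sub_mul_rpow (f := hmapsTo.restrict G F F)
      hC hα fun x y => by
        simpa only [Subtype.dist_eq, Set.MapsTo.val_restrict_apply, dist_eq_norm]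
          using hcontr x x.2 y y.2
  refine ⟨p, p.2, congrArg Subtype.val hfix, fun ψ hψ hGψ => ?_, fun φ₀ hφ₀ => ?_⟩
  · exact congrArg Subtype.val (huniq ⟨ψ, hψ⟩ (Subtype.ext hGψ))
  · have := (continuous_subtype_val.tendsto _).comp (htendsto ⟨φ₀, hφ₀⟩)
    simpa only [comp_def, Set.MapsTo.iterate_restrict, Set.MapsTo.val_restrict_apply] using this

/-- **Banach–Caccioppoli-type theorem of Gomes–Valdinoci.**
Let `F` be a (nonempty) closed subset of a Banach space and `G : F → F` satisfy
`‖G(φ) − G(ψ)‖ ≤ (1 − C‖φ − ψ‖^α)‖φ − ψ‖` for all `φ, ψ ∈ F` and some constants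
`C, α > 0`.  Then `G` has a unique fixed point `φ⁺ ∈ F`, and for every `φ₀ ∈ F` the
iterates `G^n(φ₀)` converge to `φ⁺`. -/
theorem gomes_valdinoci_fixed_point
    {E : Type*} [NormedAddCommGroup E] [NormedSpace ℝ E] [CompleteSpace E]
    (F : Set E) (hF : IsClosed F) (hFne : F.Nonempty)
    (G : E → E) (hmaps : ∀ φ ∈ F, G φ ∈ F)
    (C α : ℝ) (hC : 0 < C) (hα : 0 < α)
    (hcontr : ∀ φ ∈ F, ∀ ψ ∈ F,
      ‖G φ - G ψ‖ ≤ (1 - C * ‖φ - ψ‖ ^ α) * ‖φ - ψ‖) :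
    ∃ φp ∈ F, G φp = φp ∧ (∀ ψ ∈ F, G ψ = ψ → ψ = φp) ∧
      ∀ φ₀ ∈ F, Tendsto (fun n => G^[n] φ₀) atTop (𝓝 φp) :=
  gomes_valdinoci_fixed_point_general F hF hFne G hmaps C α hC hα hcontr
end
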